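/- arXiv:1501.07431 — 2 statements merged into one kernel-verified Lean document; each statement's English description precedes it below -/
import Mathlib

section
/- Let p be an odd prime, l ≥ 1, and consider the negacyclic code C = ⟨uv·(x+1)^{t}⟩ of length p^l over R = F_p[u,v]/⟨u²,v²,uv-vu⟩, i.e., the ideal of R[x]/⟨x^{p^l}+1⟩ generated by uv(x+1)^t, where 0 < t ≤ p^{l-1}. Then the minimum Hamming distance of C is 2. -/
/-!
Every codeword vanishes at `x = -1`: the generator `uv(x+1)^t` does since `t > 0`, and so does the
modulus `x^{p^l} + 1` since `p^l` is odd. A nonzero polynomial with a single term cannot vanish at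
the unit `-1`, so nonzero codewords have weight at least `2`. Conversely, in characteristic `p`,
`uv(x^{p^{l-1}} + 1) = uv(x+1)^{p^{l-1}}` is a multiple of the generator because `t ≤ p^{l-1}`,
and it has weight `2` because `uv ≠ 0`.
-/

open Polynomial MvPolynomial

/-- The ring `F_p[u,v]/⟨u², v², uv - vu⟩`. -/
abbrev Rpuv (p : ℕ) : Type :=
  MvPolynomial (Fin 2) (ZMod p) ⧸
    Ideal.span {(MvPolynomial.X 0 : MvPolynomial (Fin 2) (ZMod p)) ^ 2,
      MvPolynomial.X 1 ^ 2,
      MvPolynomial.X 0 * MvPolynomial.X 1 - MvPolynomial.X 1 * MvPolynomial.X 0}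

noncomputable instance (p : ℕ) : CommRing (Rpuv p) := Ideal.Quotient.commRing _

theorem Ideal.Quotient.mk_mem_span_mk_of_dvd {R : Type*} [CommRing R] {I : Ideal R} {a b : R}
    (h : a ∣ b) : Ideal.Quotient.mk I b ∈ Ideal.span {Ideal.Quotient.mk I a} :=
  Ideal.mem_span_singleton.mpr (map_dvd _ h)

namespace Polynomial

variable {R : Type*} [CommRing R]

open Finset

theorem eval_eq_zero_of_mk_mem_span_mk {q g f : R[X]} {r : R} (hq : q.eval r = 0)
    (hg : g.eval r = 0)
    (hf : Ideal.Quotient.mk (Ideal.span {q}) f ∈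
      Ideal.span {Ideal.Quotient.mk (Ideal.span {q}) g}) :
    f.eval r = 0 := by
  obtain ⟨z, hz⟩ := Ideal.mem_span_singleton'.mp hf
  obtain ⟨z, rfl⟩ := Ideal.Quotient.mk_surjective z
  rw [← map_mul, Ideal.Quotient.eq, Ideal.mem_span_singleton] at hz
  obtain ⟨c, hc⟩ := hz
  simpa [hg, hq] using congrArg (eval r) hc

theorem eval_ne_zero_of_card_support_eq_one {f : R[X]} (hf : #f.support = 1) {r : R}
    (hr : IsUnit r) : f.eval r ≠ 0 := by
  obtain ⟨k, a, ha, rfl⟩ := card_support_eq_one.mp hf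
  simpa [(hr.pow k).mul_left_eq_zero] using ha

theorem two_le_card_support_of_eval_eq_zero {f : R[X]} (hf : f ≠ 0) {r : R} (hr : IsUnit r)
    (h : f.eval r = 0) : 2 ≤ #f.support := by
  by_contra! hlt
  interval_cases hcard : #f.support
  · exact hf (support_eq_empty.mp (card_eq_zero.mp hcard))
  · exact eval_ne_zero_of_card_support_eq_one hcard hr h

theorem card_support_C_mul_X_pow_add_one {a : R} (ha : a ≠ 0) {m : ℕ} (hm : m ≠ 0) :
    #(C a * (X ^ m + 1)).support = 2 := by
  rw [show C a * (X ^ m + 1) = C a * X ^ m + C a * X ^ 0 by ring]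
  exact card_support_binomial hm ha ha

theorem degree_C_mul_X_pow_add_one_le (a : R) (m : ℕ) : (C a * (X ^ m + 1)).degree ≤ (m : WithBot ℕ) := by
  compute_degree!

end Polynomial

namespace Rpuv

/-- `u ↦ ε₁`, `v ↦ ε₂` in `(ZMod p)[ε₁][ε₂]`, a model in which `uv ≠ 0` and `ZMod p` embeds. -/
noncomputable def toDualDual (p : ℕ) : Rpuv p →ₐ[ZMod p] DualNumber (DualNumber (ZMod p)) :=
  Ideal.Quotient.liftₐ _ (MvPolynomial.aeval (R := ZMod p)
      ![(TrivSqZeroExt.inl DualNumber.eps : DualNumber (DualNumber (ZMod p))), DualNumber.eps])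
    fun x hx => RingHom.mem_ker.mp <| (Ideal.span_le (I := RingHom.ker _)).mpr
      (by rintro x (rfl | rfl | rfl) <;> simp [sq, TrivSqZeroExt.inl_mul_inl, mul_comm]) hx

theorem mk_X_zero_mul_X_one_ne_zero (p : ℕ) [Fact (1 < p)] :
    (Ideal.Quotient.mk _ (MvPolynomial.X 0 * MvPolynomial.X 1) : Rpuv p) ≠ 0 := by
  intro h
  have := congrArg (toDualDual p) h
  erw [toDualDual, Ideal.Quotient.liftₐ_apply, Ideal.Quotient.lift_mk] at this
  simpa [DualNumber.snd_mul] using congrArg (fun x => x.snd.snd) this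

theorem charP (p : ℕ) : CharP (Rpuv p) p :=
  charP_of_injective_algebraMap (R := ZMod p) (fun a b h => by
    have := congrArg (toDualDual p) h
    rw [AlgHom.commutes, AlgHom.commutes] at this
    simpa [TrivSqZeroExt.algebraMap_eq_inl'] using congrArg (fun x => x.fst.fst) this) p

end Rpuv

theorem stmt_17 (p : ℕ) (hp : p.Prime) (hodd : Odd p) (l : ℕ) (hl : 1 ≤ l)
    (u v : Rpuv p)
    (hu : u = Ideal.Quotient.mk _ (MvPolynomial.X 0))
    (hv : v = Ideal.Quotient.mk _ (MvPolynomial.X 1))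
    (t : ℕ) (ht0 : 0 < t) (ht : t ≤ p ^ (l - 1))
    (C : Ideal ((Rpuv p)[X] ⧸ Ideal.span {(Polynomial.X : (Rpuv p)[X]) ^ (p ^ l) + 1}))
    (hC : C = Ideal.span
      {Ideal.Quotient.mk (Ideal.span {(Polynomial.X : (Rpuv p)[X]) ^ (p ^ l) + 1})
        (Polynomial.C (u * v) * (Polynomial.X + 1) ^ t)}) :
    sInf {w : ℕ | ∃ f : (Rpuv p)[X], f ≠ 0 ∧ f.degree < (p ^ l : ℕ) ∧
        Ideal.Quotient.mk (Ideal.span {(Polynomial.X : (Rpuv p)[X]) ^ (p ^ l) + 1}) f ∈ C ∧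
        w = f.support.card} = 2 := by
  have := Fact.mk hp
  have : Fact (1 < p) := ⟨hp.one_lt⟩
  have := Rpuv.charP p
  subst hC
  have huv : u * v ≠ 0 := by
    rw [hu, hv, ← map_mul]
    exact Rpuv.mk_X_zero_mul_X_one_ne_zero p
  have hm : p ^ (l - 1) ≠ 0 := pow_ne_zero _ hp.ne_zero
  have hfrob : ((Polynomial.X + 1) ^ p ^ (l - 1) : (Rpuv p)[X]) =
      Polynomial.X ^ p ^ (l - 1) + 1 := by
    rw [add_pow_char_pow, one_pow]
  have hcard := card_support_C_mul_X_pow_add_one huv hm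
  refine IsLeast.csInf_eq
    ⟨⟨_, nonempty_support_iff.mp (Finset.card_pos.mp (by omega)), ?_, ?_, hcard.symm⟩, ?_⟩
  · refine (degree_C_mul_X_pow_add_one_le _ _).trans_lt ?_
    exact_mod_cast Nat.pow_lt_pow_right hp.one_lt (by omega)
  · rw [← hfrob]
    exact Ideal.Quotient.mk_mem_span_mk_of_dvd (mul_dvd_mul_left _ (pow_dvd_pow _ ht))
  · rintro _ ⟨f, hf0, -, hfC, rfl⟩
    refine two_le_card_support_of_eval_eq_zero hf0 isUnit_one.neg
      (eval_eq_zero_of_mk_mem_span_mk ?_ ?_ hfC)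
    · simp [hodd.pow.neg_one_pow]
    · simp [zero_pow ht0.ne']
end

section
/- Let p be an odd prime, n odd, and R = F_p[u,v]/⟨u²,v²,uv-vu⟩. If C is an ideal of R[x]/⟨x^n+1⟩ generated by a single polynomial G(x) = g_1(x) + u·g_{11}(x) + v·g_{12}(x) + uv·g_{13}(x) where G(x) divides x^n + 1 in R[x], then C is a free R-module of rank n - deg(g_1), with basis {G, xG, ..., x^{n-deg(g_1)-1}G}. -/
/-!
Write `G * H = X ^ n + 1`. Modulo the nilradical of `R`, which contains `u` and `v`, this reads
`g1 * H̄ = X ^ n + 1`, so `H̄` is monic of degree `k = n - deg g1`. The nilradical is nilpotent, so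
a Hensel-type correction turns `H` into a unit times a monic polynomial `M` of degree `k`.
Since `X ^ n + 1` is a nonzerodivisor, the annihilator of `G` in `R[X] ⧸ (X ^ n + 1)` is
`(H) = (M)`; hence `⟨G⟩ ≅ R[X] ⧸ (M)`, which is free with basis `1, X, …, X ^ (k - 1)`, and these
are sent to `G, X G, …, X ^ (k - 1) G`.
-/

open Polynomial MvPolynomial

namespace Polynomial

variable {R : Type*} [CommRing R]

theorem mem_map_C_iff_map_eq_zero {I : Ideal R} {p : R[X]} :
    p ∈ I.map C ↔ p.map (Ideal.Quotient.mk I) = 0 := by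
  have h := ker_mapRingHom (Ideal.Quotient.mk I)
  rw [Ideal.mk_ker] at h
  rw [← h, RingHom.mem_ker, coe_mapRingHom]

theorem divByMonic_mem_map_C {I : Ideal R} {p q : R[X]} (hq : q.Monic) (hp : p ∈ I.map C) :
    p /ₘ q ∈ I.map C := by
  rw [mem_map_C_iff_map_eq_zero] at hp ⊢
  rw [map_divByMonic _ hq, hp, zero_divByMonic]

theorem exists_isUnit_mul_sub_monic_mem_pow {I : Ideal R} (hI : IsNilpotent I)
    {H M : R[X]} (hM : M.Monic) (hHM : H - M ∈ I.map C) (k : ℕ) :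
    ∃ E M' : R[X], IsUnit E ∧ M'.Monic ∧ M'.natDegree = M.natDegree ∧
      E * H - M' ∈ I.map C ^ (k + 1) := by
  nontriviality R
  induction k with
  | zero => exact ⟨1, M, isUnit_one, hM, rfl, by simpa using hHM⟩
  | succ k ih =>
    obtain ⟨E, M', hE, hM', hdeg, hδ⟩ := ih
    set δ := E * H - M' with hδdef
    set q := δ /ₘ M'
    have hq : q ∈ I.map C := divByMonic_mem_map_C hM' (Ideal.pow_le_self k.succ_ne_zero hδ)
    have hq_nil : IsNilpotent q := by
      obtain ⟨m, hm⟩ := hI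
      refine ⟨m, ?_⟩
      have := Ideal.pow_mem_pow hq m
      rwa [← Ideal.map_pow, hm, Ideal.zero_eq_bot, Ideal.map_bot, Ideal.mem_bot] at this
    have hlt := degree_modByMonic_lt δ hM'
    refine ⟨(1 - q) * E, M' + δ %ₘ M', hq_nil.isUnit_one_sub.mul hE, hM'.add_of_left hlt,
      by rw [natDegree_add_eq_left_of_degree_lt hlt, hdeg], ?_⟩
    have hdiv := modByMonic_add_div δ M'
    have key : (1 - q) * E * H - (M' + δ %ₘ M') = -(q * δ) := by
      linear_combination (q - 1) * hδdef - hdiv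
    rw [key, pow_succ']
    exact neg_mem (Ideal.mul_mem_mul hq hδ)

theorem exists_monic_associated_of_map_monic {I : Ideal R} (hI : IsNilpotent I) {H : R[X]}
    (hH : (H.map (Ideal.Quotient.mk I)).Monic) :
    ∃ M : R[X], M.Monic ∧ M.natDegree = (H.map (Ideal.Quotient.mk I)).natDegree ∧
      Associated H M := by
  obtain ⟨M, hMH, hdeg, hM⟩ := lifts_and_natDegree_eq_and_monic
    (mem_lifts_of_surjective Ideal.Quotient.mk_surjective _) hH
  have hHM : H - M ∈ I.map C := by
    rw [mem_map_C_iff_map_eq_zero, Polynomial.map_sub, hMH, sub_self]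
  obtain ⟨m, hm⟩ := hI
  obtain ⟨E, M', hE, hM', hdeg', hmem⟩ := exists_isUnit_mul_sub_monic_mem_pow ⟨m, hm⟩ hM hHM m
  rw [← Ideal.map_pow, pow_succ, hm, zero_mul, Ideal.zero_eq_bot, Ideal.map_bot, Ideal.mem_bot,
    sub_eq_zero] at hmem
  exact ⟨M', hM', hdeg'.trans hdeg, hE.unit, by rw [mul_comm, IsUnit.unit_spec, hmem]⟩

theorem Monic.monic_and_natDegree_of_mul_eq [Nontrivial R] {g h f : R[X]} (hg : g.Monic)
    (hf : f.Monic) (hgh : g * h = f) :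
    h.Monic ∧ h.natDegree = f.natDegree - g.natDegree := by
  have hh : h.Monic := hg.of_mul_monic_left (hgh ▸ hf)
  refine ⟨hh, ?_⟩
  rw [← hgh, hg.natDegree_mul hh]
  omega

end Polynomial

theorem Ideal.torsionOf_mk_eq_span_singleton {A : Type*} [CommRing A] {f G H : A}
    (hf : IsLeftRegular f) (hGH : G * H = f) :
    Ideal.torsionOf A (A ⧸ Ideal.span {f}) (Ideal.Quotient.mk _ G) = Ideal.span {H} := by
  ext a
  rw [Ideal.mem_torsionOf_iff, Ideal.mem_span_singleton]
  change Ideal.Quotient.mk _ (a * G) = 0 ↔ _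
  rw [Ideal.Quotient.eq_zero_iff_mem, Ideal.mem_span_singleton]
  constructor
  · rintro ⟨t, ht⟩
    exact ⟨t, hf (by linear_combination H * ht - a * hGH)⟩
  · rintro ⟨t, rfl⟩
    exact ⟨t, by rw [← hGH]; ring⟩

section SpanMkBasis

variable {R : Type*} [CommRing R] {f G H M : R[X]}

noncomputable def basisSpanMk (hf : IsLeftRegular f) (hGH : G * H = f) (hM : M.Monic)
    (hHM : Associated H M) :
    Module.Basis (Fin M.natDegree) R
      ((Ideal.span {Ideal.Quotient.mk (Ideal.span {f}) G}).restrictScalars R) :=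
  let x := Ideal.Quotient.mk (Ideal.span {f}) G
  have htors : Ideal.span {M} = Ideal.torsionOf R[X] (R[X] ⧸ Ideal.span {f}) x := by
    rw [Ideal.torsionOf_mk_eq_span_singleton hf hGH]
    obtain ⟨w, rfl⟩ := hHM
    exact Ideal.span_singleton_mul_right_unit w.isUnit H
  have hspan : R[X] ∙ x = (Ideal.span {x}).restrictScalars R[X] :=
    (Submodule.restrictScalars_span R[X] _ Ideal.Quotient.mk_surjective {x}).symm
  (AdjoinRoot.powerBasis' hM).basis.map <|
    ((Submodule.quotEquivOfEq _ _ htors).trans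
      ((Ideal.quotTorsionOfEquivSpanSingleton R[X] _ x).trans
        (LinearEquiv.ofEq _ _ hspan))).restrictScalars R

theorem basisSpanMk_apply (hf : IsLeftRegular f) (hGH : G * H = f) (hM : M.Monic)
    (hHM : Associated H M) (i : Fin M.natDegree) :
    (basisSpanMk hf hGH hM hHM i : R[X] ⧸ Ideal.span {f}) =
      Ideal.Quotient.mk _ (Polynomial.X ^ (i : ℕ) * G) := by
  have h := (AdjoinRoot.powerBasis' hM).basis_eq_pow i
  rw [AdjoinRoot.powerBasis'_gen, ← AdjoinRoot.mk_X, ← map_pow] at h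
  rw [basisSpanMk]
  -- `AdjoinRoot M` and `R[X] ⧸ Ideal.span {M}` carry their `R`-module structures by different
  -- (defeq) routes, so the rewrite has to see through instances.
  erw [Module.Basis.map_apply, h]
  rfl

end SpanMkBasis

namespace Rpuv

theorem mk_X_sq (p : ℕ) (i : Fin 2) :
    (Ideal.Quotient.mk _ (MvPolynomial.X i) : Rpuv p) ^ 2 = 0 := by
  rw [← map_pow, Ideal.Quotient.eq_zero_iff_mem]
  apply Ideal.subset_span
  fin_cases i <;> simp

theorem nontrivial {p : ℕ} (hp : p ≠ 1) : Nontrivial (Rpuv p) := by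
  have : Nontrivial (ZMod p) := ZMod.nontrivial_iff.mpr hp
  refine Ideal.Quotient.nontrivial_iff.mpr
    (ne_top_of_le_ne_top (RingHom.ker_ne_top MvPolynomial.constantCoeff) ?_)
  rw [Ideal.span_le]
  rintro _ (rfl | rfl | rfl) <;> simp [mul_comm]

end Rpuv

theorem stmt_19_general (p : ℕ) (hp : p.Prime)
    (n : ℕ) (hpos : 0 < n)
    (u v : Rpuv p)
    (hu : u = Ideal.Quotient.mk _ (MvPolynomial.X 0))
    (hv : v = Ideal.Quotient.mk _ (MvPolynomial.X 1))
    (g1 g11 g12 g13 : (ZMod p)[X]) (hg1 : g1.Monic)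
    (G : (Rpuv p)[X])
    (hG : G = g1.map (algebraMap (ZMod p) (Rpuv p)) +
        Polynomial.C u * g11.map (algebraMap (ZMod p) (Rpuv p)) +
        Polynomial.C v * g12.map (algebraMap (ZMod p) (Rpuv p)) +
        Polynomial.C (u * v) * g13.map (algebraMap (ZMod p) (Rpuv p)))
    (hdvd : G ∣ (Polynomial.X : (Rpuv p)[X]) ^ n + 1)
    (C : Ideal ((Rpuv p)[X] ⧸ Ideal.span {(Polynomial.X : (Rpuv p)[X]) ^ n + 1}))
    (hC : C = Ideal.span
      {Ideal.Quotient.mk (Ideal.span {(Polynomial.X : (Rpuv p)[X]) ^ n + 1}) G}) :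
    ∃ b : Module.Basis (Fin (n - g1.natDegree)) (Rpuv p) (C.restrictScalars (Rpuv p)),
      ∀ i : Fin (n - g1.natDegree),
        (b i : (Rpuv p)[X] ⧸ Ideal.span {(Polynomial.X : (Rpuv p)[X]) ^ n + 1}) =
          Ideal.Quotient.mk (Ideal.span {(Polynomial.X : (Rpuv p)[X]) ^ n + 1})
            (Polynomial.X ^ (i : ℕ) * G) := by
  have : Fact p.Prime := ⟨hp⟩
  have : Nontrivial (Rpuv p) := Rpuv.nontrivial hp.one_lt.ne'
  set N := nilradical (Rpuv p)
  have : Nontrivial (Rpuv p ⧸ N) := Ideal.Quotient.nontrivial_iff.mpr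
    (by simp [N, nilradical, Ideal.radical_eq_top])
  have hN : ∀ {w : Rpuv p}, w ^ 2 = 0 → Ideal.Quotient.mk N w = 0 := fun hw =>
    Ideal.Quotient.eq_zero_iff_mem.mpr (mem_nilradical.mpr ⟨2, hw⟩)
  have hGN : G.map (Ideal.Quotient.mk N) = g1.map (algebraMap (ZMod p) (Rpuv p ⧸ N)) := by
    simp [hG, Polynomial.map_map, hN (hu ▸ Rpuv.mk_X_sq p 0), hN (hv ▸ Rpuv.mk_X_sq p 1)]
  have hXn : ∀ (S : Type) [CommRing S], ((Polynomial.X : S[X]) ^ n + 1).Monic := fun S _ => by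
    simpa using monic_X_pow_add_C (1 : S) hpos.ne'
  obtain ⟨H, hGH⟩ := hdvd
  obtain ⟨hHN, hHdeg⟩ := (hg1.map (algebraMap (ZMod p) (Rpuv p ⧸ N))).monic_and_natDegree_of_mul_eq
    (hXn _) (by simpa [hGN] using congrArg (Polynomial.map (Ideal.Quotient.mk N)) hGH.symm)
  obtain ⟨M, hM, hMdeg, hHM⟩ :=
    exists_monic_associated_of_map_monic (IsNoetherianRing.isNilpotent_nilradical _) hHN
  have hk : M.natDegree = n - g1.natDegree := by
    rw [hMdeg, hHdeg, hg1.natDegree_map, ← Polynomial.C_1, natDegree_X_pow_add_C]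
  subst hC
  refine ⟨(basisSpanMk (hXn _).isRegular.left hGH.symm hM hHM).reindex (finCongr hk), fun i => ?_⟩
  rw [Module.Basis.reindex_apply, basisSpanMk_apply]
  rfl

theorem stmt_19 (p : ℕ) (hp : p.Prime) (hodd : Odd p)
    (n : ℕ) (hn : Odd n) (hpos : 0 < n)
    (u v : Rpuv p)
    (hu : u = Ideal.Quotient.mk _ (MvPolynomial.X 0))
    (hv : v = Ideal.Quotient.mk _ (MvPolynomial.X 1))
    (g1 g11 g12 g13 : (ZMod p)[X]) (hg1 : g1.Monic)
    (G : (Rpuv p)[X])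
    (hG : G = g1.map (algebraMap (ZMod p) (Rpuv p)) +
        Polynomial.C u * g11.map (algebraMap (ZMod p) (Rpuv p)) +
        Polynomial.C v * g12.map (algebraMap (ZMod p) (Rpuv p)) +
        Polynomial.C (u * v) * g13.map (algebraMap (ZMod p) (Rpuv p)))
    (hdvd : G ∣ (Polynomial.X : (Rpuv p)[X]) ^ n + 1)
    (C : Ideal ((Rpuv p)[X] ⧸ Ideal.span {(Polynomial.X : (Rpuv p)[X]) ^ n + 1}))
    (hC : C = Ideal.span
      {Ideal.Quotient.mk (Ideal.span {(Polynomial.X : (Rpuv p)[X]) ^ n + 1}) G}) :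
    ∃ b : Module.Basis (Fin (n - g1.natDegree)) (Rpuv p) (C.restrictScalars (Rpuv p)),
      ∀ i : Fin (n - g1.natDegree),
        (b i : (Rpuv p)[X] ⧸ Ideal.span {(Polynomial.X : (Rpuv p)[X]) ^ n + 1}) =
          Ideal.Quotient.mk (Ideal.span {(Polynomial.X : (Rpuv p)[X]) ^ n + 1})
            (Polynomial.X ^ (i : ℕ) * G) :=
  stmt_19_general p hp n hpos u v hu hv g1 g11 g12 g13 hg1 G hG hdvd C hC
end
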